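/- Let ν ≥ 16 and define η_t = (4dq)^{-1} min(1, sqrt(ν log(t+1)/t)) for integers t ≥ 1, with constants d ≥ 1 and q > 0. Then ∑_{t=1}^T 1/(η_t t) ≤ 4dq (log(ν² + 1) + 2 sqrt(T/ν)) for every integer T ≥ 1. -/

import Mathlib

/-!
Write `c = 4dq`. When `t ≤ ν log (t + 1)` the minimum is `1` and the term is `c / t`; from
`log x ≤ 4 x^{1/4} / e` and `ν ≥ 16` such `t` satisfy `e t ≤ ν²`, so these terms add up to at most
`c H_M` with `M = ⌊ν² / e⌋`, and `H_M ≤ 1 + log M ≤ log ν²`. Otherwise `t > 16 log 2 > e - 1`, so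
`log (t + 1) ≥ 1` and the term is at most `c / √(ν t)`; finally `∑_{t ≤ T} t^{-1/2} ≤ 2 √T`.
-/

open Real Finset

lemma exp_one_mul_div_pow_le_exp {u : ℝ} (hu : 0 ≤ u) (n : ℕ) : (exp 1 * u / n) ^ n ≤ exp u := by
  rcases eq_or_ne n 0 with rfl | hn
  · simpa using one_le_exp hu
  calc (exp 1 * u / n) ^ n = (exp 1 * (u / n)) ^ n := by rw [mul_div_assoc]
    _ ≤ exp (u / n) ^ n := by gcongr; exact exp_one_mul_le_exp
    _ = exp u := by rw [← exp_nat_mul, mul_div_cancel₀ _ (Nat.cast_ne_zero.2 hn)]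

lemma exp_one_mul_le_sq_of_le_mul_log {ν t : ℝ} (hν : 16 ≤ ν) (ht : 1 ≤ t)
    (h : t ≤ ν * log (t + 1)) : exp 1 * t ≤ ν ^ 2 := by
  have hL : (exp 1 * log (t + 1) / 4) ^ 4 ≤ t + 1 := by
    simpa [exp_log (by linarith : 0 < t + 1)] using
      exp_one_mul_div_pow_le_exp (log_nonneg (by linarith : 1 ≤ t + 1)) 4
  have he := exp_one_gt_two
  have hpow : (exp 1 * t) ^ 4 ≤ 512 * ν ^ 4 * t := by
    calc (exp 1 * t) ^ 4 ≤ (exp 1 * (ν * log (t + 1))) ^ 4 := by gcongr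
      _ = (4 * ν) ^ 4 * (exp 1 * log (t + 1) / 4) ^ 4 := by ring
      _ ≤ (4 * ν) ^ 4 * (2 * t) := by gcongr; linarith
      _ = 512 * ν ^ 4 * t := by ring
  have h512 : 512 * ν ^ 4 * t ≤ exp 1 * (ν ^ 2) ^ 3 * t := by
    have : 512 ≤ exp 1 * ν ^ 2 := by nlinarith
    calc 512 * ν ^ 4 * t ≤ exp 1 * ν ^ 2 * ν ^ 4 * t := by gcongr
      _ = exp 1 * (ν ^ 2) ^ 3 * t := by ring
  have hcube : (exp 1 * t) ^ 3 ≤ (ν ^ 2) ^ 3 := by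
    have := hpow.trans h512
    rw [show (exp 1 * t) ^ 4 = (exp 1 * t) ^ 3 * (exp 1 * t) by ring,
      show exp 1 * (ν ^ 2) ^ 3 * t = (ν ^ 2) ^ 3 * (exp 1 * t) by ring] at this
    exact le_of_mul_le_mul_right this (by positivity)
  exact le_of_pow_le_pow_left₀ (by norm_num) (by positivity) hcube

lemma sum_filter_inv_le_log {ν : ℝ} (hν : 16 ≤ ν) (T : ℕ) :
    ∑ t ∈ Icc 1 T with ((t : ℕ) : ℝ) ≤ ν * log (t + 1), (t : ℝ)⁻¹ ≤ log (ν ^ 2 + 1) := by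
  set M := ⌊ν ^ 2 / exp 1⌋₊
  have hM : 1 ≤ M := Nat.one_le_floor_iff _ |>.2 <| by
    rw [le_div_iff₀ (exp_pos 1)]; nlinarith [exp_one_lt_three]
  have hsub : {t ∈ Icc 1 T | ((t : ℕ) : ℝ) ≤ ν * log (t + 1)} ⊆ Icc 1 M := by
    intro t ht
    simp only [mem_filter, mem_Icc] at ht ⊢
    refine ⟨ht.1.1, Nat.le_floor ?_⟩
    rw [le_div_iff₀' (exp_pos 1)]
    exact exp_one_mul_le_sq_of_le_mul_log hν (Nat.one_le_cast.2 ht.1.1) ht.2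
  calc ∑ t ∈ Icc 1 T with ((t : ℕ) : ℝ) ≤ ν * log (t + 1), (t : ℝ)⁻¹
      ≤ ∑ t ∈ Icc 1 M, (t : ℝ)⁻¹ := sum_le_sum_of_subset_of_nonneg hsub (by intros; positivity)
    _ = harmonic M := by simp [harmonic_eq_sum_Icc]
    _ ≤ 1 + log M := harmonic_le_one_add_log M
    _ ≤ 1 + log (ν ^ 2 / exp 1) := by
        gcongr
        exact Nat.floor_le (by positivity)
    _ = log (ν ^ 2) := by rw [log_div (by positivity) (exp_pos 1).ne', log_exp]; ring
    _ ≤ log (ν ^ 2 + 1) := log_le_log (by positivity) (by linarith)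

lemma sum_inv_sqrt_le (n : ℕ) : ∑ t ∈ Icc 1 n, (√t)⁻¹ ≤ 2 * √n := by
  induction n with
  | zero => simp
  | succ m ih =>
    rw [sum_Icc_succ_top (by omega)]
    have hm : √m ≤ √(m + 1) := sqrt_le_sqrt (by linarith)
    have hpos : 0 < √(m + 1) := sqrt_pos.2 (by positivity)
    have hsq : √(m + 1) ^ 2 = m + 1 := sq_sqrt (by positivity)
    -- `1 / √(m+1) ≤ 2 / (√m + √(m+1)) = 2 (√(m+1) - √m)`
    have step : (√(m + 1))⁻¹ ≤ 2 * √(m + 1) - 2 * √m := by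
      rw [inv_le_iff_one_le_mul₀ hpos]
      nlinarith [sq_sqrt (Nat.cast_nonneg m : (0:ℝ) ≤ m)]
    push_cast
    linarith

lemma sum_inv_sqrt_mul_le (a : ℝ) (n : ℕ) : ∑ t ∈ Icc 1 n, (√(a * t))⁻¹ ≤ 2 * √(n / a) := by
  simp_rw [sqrt_mul' a (Nat.cast_nonneg _), mul_inv, ← mul_sum]
  calc (√a)⁻¹ * ∑ t ∈ Icc 1 n, (√t)⁻¹ ≤ (√a)⁻¹ * (2 * √n) := by gcongr; exact sum_inv_sqrt_le n
    _ = 2 * √(n / a) := by rw [sqrt_div (Nat.cast_nonneg _)]; ring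

lemma one_div_inv_mul_min_mul_eq {c ν t : ℝ} (ht : 0 < t) (h : t ≤ ν * log (t + 1)) :
    1 / ((c⁻¹ * min 1 √(ν * log (t + 1) / t)) * t) = c * t⁻¹ := by
  rw [min_eq_left (one_le_sqrt.2 ((one_le_div ht).2 h)), mul_one, one_div, mul_inv, inv_inv]

lemma one_div_inv_mul_min_mul_le {c ν t : ℝ} (hc : 0 ≤ c) (hν : 16 ≤ ν) (ht : 1 ≤ t)
    (h : ν * log (t + 1) < t) :
    1 / ((c⁻¹ * min 1 √(ν * log (t + 1) / t)) * t) ≤ c * (√(ν * t))⁻¹ := by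
  have ht0 : 0 < t := by linarith
  have hlog : 1 ≤ log (t + 1) := by
    have hlog2 : log 2 ≤ log (t + 1) := log_le_log (by norm_num) (by linarith)
    have : exp 1 ≤ t + 1 := by nlinarith [log_two_gt_d9, exp_one_lt_three]
    simpa using log_le_log (exp_pos 1) this
  have hmin : min 1 √(ν * log (t + 1) / t) = √(ν * log (t + 1) / t) :=
    min_eq_right (sqrt_le_one.2 ((div_le_one ht0).2 h.le))
  have hsqrt : √(ν * t) ≤ √(ν * log (t + 1) / t) * t := by
    have hsq : ν * log (t + 1) / t * t ^ 2 = ν * log (t + 1) * t := by field_simp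
    calc √(ν * t) ≤ √(ν * log (t + 1) / t * t ^ 2) :=
          sqrt_le_sqrt <| by
            rw [hsq, mul_right_comm]; exact le_mul_of_one_le_right (by positivity) hlog
      _ = √(ν * log (t + 1) / t) * t := by rw [sqrt_mul' _ (sq_nonneg t), sqrt_sq ht0.le]
  rw [hmin, mul_assoc, one_div, mul_inv, inv_inv]
  gcongr

theorem stmt_9_general (ν d q : ℝ) (hν : 16 ≤ ν) (hd : 1 ≤ d) (hq : 0 < q)
    (η : ℕ → ℝ)
    (hη : ∀ t : ℕ, 1 ≤ t →
      η t = (4 * d * q)⁻¹ * min 1 (Real.sqrt (ν * Real.log (t + 1) / t)))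
    (T : ℕ) :
    ∑ t ∈ Finset.Icc 1 T, 1 / (η t * t)
      ≤ 4 * d * q * (Real.log (ν ^ 2 + 1) + 2 * Real.sqrt (T / ν)) := by
  have hc : 0 ≤ 4 * d * q := mul_nonneg (by linarith) hq.le
  rw [← sum_filter_add_sum_filter_not (Icc 1 T) (fun t : ℕ ↦ (t : ℝ) ≤ ν * log (t + 1)), mul_add]
  gcongr ?_ + ?_
  · calc _ = ∑ t ∈ Icc 1 T with ((t : ℕ) : ℝ) ≤ ν * log (t + 1), 4 * d * q * (t : ℝ)⁻¹ := by
          refine sum_congr rfl fun t ht ↦ ?_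
          rw [mem_filter, mem_Icc] at ht
          rw [hη t ht.1.1, one_div_inv_mul_min_mul_eq (by exact_mod_cast ht.1.1) ht.2]
      _ ≤ 4 * d * q * log (ν ^ 2 + 1) := by
          rw [← mul_sum]; exact mul_le_mul_of_nonneg_left (sum_filter_inv_le_log hν T) hc
  · calc _ ≤ ∑ t ∈ Icc 1 T with ¬((t : ℕ) : ℝ) ≤ ν * log (t + 1), 4 * d * q * (√(ν * t))⁻¹ := by
          refine sum_le_sum fun t ht ↦ ?_
          rw [mem_filter, mem_Icc, not_le] at ht
          rw [hη t ht.1.1]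
          exact one_div_inv_mul_min_mul_le hc hν (by exact_mod_cast ht.1.1) ht.2
      _ ≤ ∑ t ∈ Icc 1 T, 4 * d * q * (√(ν * t))⁻¹ :=
          sum_le_sum_of_subset_of_nonneg (filter_subset _ _) (fun _ _ _ ↦ by positivity)
      _ ≤ 4 * d * q * (2 * √(T / ν)) := by
          rw [← mul_sum]; exact mul_le_mul_of_nonneg_left (sum_inv_sqrt_mul_le ν T) hc

theorem stmt_9 (ν d q : ℝ) (hν : 16 ≤ ν) (hd : 1 ≤ d) (hq : 0 < q)
    (η : ℕ → ℝ)
    (hη : ∀ t : ℕ, 1 ≤ t →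
      η t = (4 * d * q)⁻¹ * min 1 (Real.sqrt (ν * Real.log (t + 1) / t)))
    (T : ℕ) (hT : 1 ≤ T) :
    ∑ t ∈ Finset.Icc 1 T, 1 / (η t * t)
      ≤ 4 * d * q * (Real.log (ν ^ 2 + 1) + 2 * Real.sqrt (T / ν)) :=
  stmt_9_general ν d q hν hd hq η hη T
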